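/- arXiv:1307.0396 — 2 statements merged into one kernel-verified Lean document; each statement's English description precedes it below -/
import Mathlib

section
/- If a sequence of probability density functions on ℝ^d is uniformly equicontinuous and uniformly bounded, and the corresponding probability measures converge weakly to a probability measure μ, then the measures converge to μ in total variation. -/
/-!
Testing `f n` against a normed bump function centred at `x` is a mollification at `x` whose error
is uniform in `n` by equicontinuity, while weak convergence makes the tested integrals converge;
hence `f n x` is Cauchy and `f n` converges pointwise to a continuous `g ≥ 0`. As `f n ≤ C`,
dominated convergence gives `∫ f n ψ → ∫ g ψ` for compactly supported continuous `ψ`, so weak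
convergence identifies `g dx` with `μ`, both measures being regular. Thus `g` is a probability
density, and Scheffé's lemma turns pointwise convergence of the densities into `L¹` convergence,
which dominates the total variation distance.
-/

open MeasureTheory Filter Topology BoundedContinuousFunction

/-- Total variation distance: `2 sup_B |μ(B) − ν(B)|`. -/
noncomputable def dTV {X : Type*} [MeasurableSpace X] (μ ν : Measure X) : ℝ :=
  2 * ⨆ B : Set X, |(μ B).toReal - (ν B).toReal|

open scoped CompactlySupported

theorem cauchySeq_of_forall_exists_cauchySeq_dist_le {α β : Type*} [PseudoMetricSpace α]
    [Nonempty β] [SemilatticeSup β] {u : β → α}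
    (h : ∀ ε > 0, ∃ v : β → α, CauchySeq v ∧ ∀ n, dist (u n) (v n) ≤ ε) : CauchySeq u := by
  refine Metric.cauchySeq_iff'.2 fun ε hε => ?_
  obtain ⟨v, hv, huv⟩ := h (ε / 3) (by positivity)
  obtain ⟨N, hN⟩ := Metric.cauchySeq_iff'.1 hv (ε / 3) (by positivity)
  refine ⟨N, fun n hn => ?_⟩
  calc dist (u n) (u N) ≤ dist (u n) (v n) + dist (v n) (v N) + dist (v N) (u N) :=
        dist_triangle4 _ _ _ _
    _ < ε := by linarith [huv n, hN n hn, huv N, dist_comm (v N) (u N)]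

section Mollification

variable {E : Type*} [NormedAddCommGroup E] [NormedSpace ℝ E] [FiniteDimensional ℝ E]
  [MeasurableSpace E] [BorelSpace E] {μ : Measure E} [μ.IsAddHaarMeasure]

/-- `ψ` is a normed bump function centred at `x` whose radius comes from equicontinuity at `x`,
so that `∫ F i * ψ` is the convolution of `F i` with a mollifier, evaluated at `x`. -/
theorem Equicontinuous.exists_compactlySupported_dist_integral_mul_le {ι : Type*}
    {F : ι → E → ℝ} (hF : Equicontinuous F) (hmeas : ∀ i, AEStronglyMeasurable (F i) μ)
    (x : E) {ε : ℝ} (hε : 0 < ε) :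
    ∃ ψ : C_c(E, ℝ), ∀ i, dist (∫ t, F i t * ψ t ∂μ) (F i x) ≤ ε := by
  obtain ⟨δ, hδ, hFδ⟩ := Metric.equicontinuousAt_iff.1 (hF x) ε hε
  let b : ContDiffBump (0 : E) := ⟨δ / 2, δ, by positivity, by linarith⟩
  let ψ : C_c(E, ℝ) :=
    ⟨⟨fun t => b.normed μ (x - t), b.continuous_normed.comp (continuous_const.sub continuous_id)⟩,
      b.hasCompactSupport_normed.comp_homeomorph (Homeomorph.subLeft x)⟩
  refine ⟨ψ, fun i => ?_⟩
  have hconv := b.dist_normed_convolution_le (hmeas i) fun y hy => by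
    rw [dist_comm]; exact (hFδ y (Metric.mem_ball.1 hy) i).le
  simp_rw [convolution_lsmul_swap, smul_eq_mul, mul_comm] at hconv
  exact hconv

theorem Equicontinuous.cauchySeq_apply_of_cauchySeq_integral {F : ℕ → E → ℝ}
    (hF : Equicontinuous F) (hmeas : ∀ n, AEStronglyMeasurable (F n) μ)
    (hconv : ∀ ψ : C_c(E, ℝ), CauchySeq fun n => ∫ t, F n t * ψ t ∂μ) (x : E) :
    CauchySeq fun n => F n x :=
  cauchySeq_of_forall_exists_cauchySeq_dist_le fun _ hε =>
    let ⟨ψ, hψ⟩ := hF.exists_compactlySupported_dist_integral_mul_le hmeas x hε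
    ⟨_, hconv ψ, fun n => by rw [dist_comm]; exact hψ n⟩

theorem Equicontinuous.exists_continuous_tendsto_of_cauchySeq_integral {F : ℕ → E → ℝ}
    (hF : Equicontinuous F) (hmeas : ∀ n, AEStronglyMeasurable (F n) μ)
    (hconv : ∀ ψ : C_c(E, ℝ), CauchySeq fun n => ∫ t, F n t * ψ t ∂μ) :
    ∃ g : E → ℝ, Continuous g ∧ ∀ x, Tendsto (F · x) atTop (𝓝 (g x)) := by
  choose g hg using fun x =>
    cauchySeq_tendsto_of_complete (hF.cauchySeq_apply_of_cauchySeq_integral hmeas hconv x)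
  exact ⟨g, (tendsto_pi_nhds.2 hg).continuous_of_equicontinuous hF, hg⟩

end Mollification

section Densities

variable {X : Type*} [MeasurableSpace X] {μ : Measure X}

theorem integral_withDensity_ofReal {E : Type*} [NormedAddCommGroup E] [NormedSpace ℝ E]
    {p : X → ℝ} (hp : AEMeasurable p μ) (hp0 : 0 ≤ᵐ[μ] p) (φ : X → E) :
    ∫ x, φ x ∂μ.withDensity (fun x => ENNReal.ofReal (p x)) = ∫ x, p x • φ x ∂μ := by
  rw [integral_withDensity_eq_integral_toReal_smul₀ hp.ennreal_ofReal
    (ae_of_all _ fun _ => ENNReal.ofReal_lt_top)]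
  exact integral_congr_ae (hp0.mono fun x hx => by simp only [ENNReal.toReal_ofReal hx])

theorem integrable_of_isFiniteMeasure_withDensity_ofReal {p : X → ℝ}
    (hp : AEStronglyMeasurable p μ) (hp0 : 0 ≤ᵐ[μ] p)
    [IsFiniteMeasure (μ.withDensity fun x => ENNReal.ofReal (p x))] : Integrable p μ := by
  refine ⟨hp, (hasFiniteIntegral_iff_ofReal hp0).2 ?_⟩
  have h := measure_lt_top (μ.withDensity fun x => ENNReal.ofReal (p x)) Set.univ
  rwa [withDensity_apply _ MeasurableSet.univ, Measure.restrict_univ] at h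

theorem measureReal_withDensity_ofReal [SFinite μ] {p : X → ℝ} (hp : Integrable p μ)
    (hp0 : 0 ≤ᵐ[μ] p) (B : Set X) :
    (μ.withDensity fun x => ENNReal.ofReal (p x)).real B = ∫ x in B, p x ∂μ := by
  rw [measureReal_def, withDensity_apply',
    ← ofReal_integral_eq_lintegral_ofReal hp.integrableOn (ae_restrict_of_ae hp0),
    ENNReal.toReal_ofReal (setIntegral_nonneg_of_ae_restrict (ae_restrict_of_ae hp0))]

theorem dTV_nonneg (μ ν : Measure X) : 0 ≤ dTV μ ν :=
  mul_nonneg zero_le_two (Real.iSup_nonneg fun _ => abs_nonneg _)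

theorem dTV_withDensity_ofReal_le [SFinite μ] {p q : X → ℝ} (hp : Integrable p μ)
    (hq : Integrable q μ) (hp0 : 0 ≤ᵐ[μ] p) (hq0 : 0 ≤ᵐ[μ] q) :
    dTV (μ.withDensity fun x => ENNReal.ofReal (p x)) (μ.withDensity fun x => ENNReal.ofReal (q x))
      ≤ 2 * ∫ x, |p x - q x| ∂μ := by
  refine mul_le_mul_of_nonneg_left
    (Real.iSup_le (fun B => ?_) (integral_nonneg fun _ => abs_nonneg _)) zero_le_two
  change |Measure.real _ B - Measure.real _ B| ≤ _
  rw [measureReal_withDensity_ofReal hp hp0, measureReal_withDensity_ofReal hq hq0,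
    ← integral_sub hp.integrableOn hq.integrableOn]
  calc |∫ x in B, (p x - q x) ∂μ| ≤ ∫ x in B, |p x - q x| ∂μ := abs_integral_le_integral_abs
    _ ≤ ∫ x, |p x - q x| ∂μ :=
      setIntegral_le_integral (hp.sub hq).abs (ae_of_all _ fun _ => abs_nonneg _)

theorem tendsto_integral_mul_of_tendsto_of_bound {ι : Type*} {l : Filter ι}
    [l.IsCountablyGenerated] {F : ι → X → ℝ} {g ψ : X → ℝ} {C : ℝ}
    (hmeas : ∀ i, AEStronglyMeasurable (F i) μ) (hbound : ∀ i, ∀ᵐ x ∂μ, ‖F i x‖ ≤ C)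
    (hlim : ∀ᵐ x ∂μ, Tendsto (F · x) l (𝓝 (g x))) (hψ : Integrable ψ μ) :
    Tendsto (fun i => ∫ x, F i x * ψ x ∂μ) l (𝓝 (∫ x, g x * ψ x ∂μ)) := by
  refine tendsto_integral_filter_of_dominated_convergence (fun x => C * ‖ψ x‖)
    (Eventually.of_forall fun i => (hmeas i).mul hψ.1)
    (Eventually.of_forall fun i => (hbound i).mono fun x hx => ?_) (hψ.norm.const_mul C)
    (hlim.mono fun x hx => hx.mul_const _)
  rw [norm_mul]
  exact mul_le_mul_of_nonneg_right hx (norm_nonneg _)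

/-- **Scheffé's lemma**: `|f - g| = (f - g) + 2 (g - f)⁺` and `0 ≤ (g - f)⁺ ≤ |g|` for `f ≥ 0`,
so dominated convergence applies to the positive part. -/
theorem tendsto_integral_abs_sub_of_tendsto_integral {ι : Type*} {l : Filter ι}
    [l.IsCountablyGenerated] {f : ι → X → ℝ} {g : X → ℝ} (hf : ∀ i, Integrable (f i) μ)
    (hg : Integrable g μ) (hf0 : ∀ i, 0 ≤ᵐ[μ] f i)
    (hlim : ∀ᵐ x ∂μ, Tendsto (f · x) l (𝓝 (g x)))
    (hint : Tendsto (fun i => ∫ x, f i x ∂μ) l (𝓝 (∫ x, g x ∂μ))) :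
    Tendsto (fun i => ∫ x, |f i x - g x| ∂μ) l (𝓝 0) := by
  have hpart (i : ι) : Integrable (fun x => max (g x - f i x) 0) μ := (hg.sub (hf i)).pos_part
  have hdom (i : ι) : ∀ᵐ x ∂μ, ‖max (g x - f i x) 0‖ ≤ ‖g x‖ :=
    (hf0 i).mono fun x (hx : 0 ≤ f i x) => by
      rw [Real.norm_of_nonneg (le_max_right _ _), Real.norm_eq_abs]
      exact max_le (by linarith [le_abs_self (g x)]) (abs_nonneg _)
  have hlim0 : ∀ᵐ x ∂μ, Tendsto (fun i => max (g x - f i x) 0) l (𝓝 0) := hlim.mono fun x hx => by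
    simpa using ((tendsto_const_nhds (x := g x)).sub hx).max (tendsto_const_nhds (x := (0 : ℝ)))
  have hpos : Tendsto (fun i => ∫ x, max (g x - f i x) 0 ∂μ) l (𝓝 0) := by
    simpa only [integral_zero] using tendsto_integral_filter_of_dominated_convergence _
      (Eventually.of_forall fun i => (hpart i).1) (Eventually.of_forall hdom) hg.norm hlim0
  have hsplit : ∀ i, ∫ x, |f i x - g x| ∂μ
      = (∫ x, f i x ∂μ - ∫ x, g x ∂μ) + 2 * ∫ x, max (g x - f i x) 0 ∂μ := fun i => by
    have hpt : ∀ x, |f i x - g x| = (f i x - g x) + 2 * max (g x - f i x) 0 := fun x => by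
      rcases le_total (f i x) (g x) with h | h
      · rw [abs_of_nonpos (sub_nonpos.2 h), max_eq_left (sub_nonneg.2 h)]; ring
      · rw [abs_of_nonneg (sub_nonneg.2 h), max_eq_right (sub_nonpos.2 h)]; ring
    have hsub : Integrable (fun x => f i x - g x) μ := (hf i).sub hg
    simp_rw [hpt]
    rw [integral_add hsub ((hpart i).const_mul 2),
      integral_sub (hf i) hg, integral_const_mul]
  simp_rw [hsplit]
  simpa using (hint.sub_const (∫ x, g x ∂μ)).add (hpos.const_mul 2)

end Densities

theorem withDensity_ofReal_eq_of_tendsto_integral_mul {X : Type*} [MetricSpace X] [ProperSpace X]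
    [MeasurableSpace X] [BorelSpace X] {ρ μ : Measure X} [IsLocallyFiniteMeasure ρ] [μ.Regular]
    {F : ℕ → X → ℝ} {g : X → ℝ} {C : ℝ} (hmeas : ∀ n, AEStronglyMeasurable (F n) ρ)
    (hbound : ∀ n x, ‖F n x‖ ≤ C) (hlim : ∀ x, Tendsto (F · x) atTop (𝓝 (g x)))
    (hg : Continuous g) (hg0 : ∀ x, 0 ≤ g x)
    (hweak : ∀ ψ : C_c(X, ℝ), Tendsto (fun n => ∫ x, F n x * ψ x ∂ρ) atTop (𝓝 (∫ x, ψ x ∂μ))) :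
    ρ.withDensity (fun x => ENNReal.ofReal (g x)) = μ := by
  have := IsLocallyFiniteMeasure.withDensity_ofReal (μ := ρ) hg
  refine Measure.ext_of_integral_eq_on_compactlySupported fun ψ => ?_
  rw [integral_withDensity_ofReal hg.aemeasurable (ae_of_all _ hg0)]
  exact tendsto_nhds_unique (tendsto_integral_mul_of_tendsto_of_bound hmeas
    (fun n => ae_of_all _ (hbound n)) (ae_of_all _ hlim) ψ.integrable) (hweak ψ)

/-- If a uniformly bounded, uniformly equicontinuous sequence of probability densities on ℝ^d
induces measures converging weakly to a probability measure μ, then they converge to μ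
in total variation. -/
theorem scheffe_equicontinuous_weak_to_tv
    (d : ℕ) (f : ℕ → EuclideanSpace ℝ (Fin d) → ℝ)
    (hmeas : ∀ n, Measurable (f n))
    (hnonneg : ∀ n x, 0 ≤ f n x)
    (hprob : ∀ n, ∫ x, f n x = 1)
    (hbdd : ∃ C : ℝ, ∀ n x, f n x ≤ C)
    (hequi : Equicontinuous f)
    (μ : Measure (EuclideanSpace ℝ (Fin d))) [IsProbabilityMeasure μ]
    (hweak : ∀ g : EuclideanSpace ℝ (Fin d) →ᵇ ℝ,
      Tendsto (fun n => ∫ x, g x ∂(volume.withDensity (fun x => ENNReal.ofReal (f n x))))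
        atTop (𝓝 (∫ x, g x ∂μ))) :
    Tendsto (fun n => dTV (volume.withDensity (fun x => ENNReal.ofReal (f n x))) μ)
      atTop (𝓝 0) := by
  obtain ⟨C, hC⟩ := hbdd
  have hf_int (n : ℕ) : Integrable (f n) := integrable_of_integral_eq_one (hprob n)
  have hweak' (ψ : C_c(EuclideanSpace ℝ (Fin d), ℝ)) :
      Tendsto (fun n => ∫ x, f n x * ψ x) atTop (𝓝 (∫ x, ψ x ∂μ)) := by
    simpa only [integral_withDensity_ofReal (hmeas _).aemeasurable (ae_of_all _ (hnonneg _)),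
      smul_eq_mul, CompactlySupportedContinuousMap.toBoundedContinuousFunction_apply]
      using hweak ψ.toBoundedContinuousFunction
  obtain ⟨g, hg_cont, hg⟩ := hequi.exists_continuous_tendsto_of_cauchySeq_integral
    (μ := volume) (fun n => (hmeas n).aestronglyMeasurable) fun ψ => (hweak' ψ).cauchySeq
  have hg0 (x) : 0 ≤ g x := ge_of_tendsto' (hg x) fun n => hnonneg n x
  have hν : volume.withDensity (fun x => ENNReal.ofReal (g x)) = μ :=
    withDensity_ofReal_eq_of_tendsto_integral_mul (fun n => (hmeas n).aestronglyMeasurable)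
      (fun n x => (Real.norm_of_nonneg (hnonneg n x)).trans_le (hC n x)) hg hg_cont hg0 hweak'
  have hg_int : Integrable g := by
    have : IsFiniteMeasure (volume.withDensity fun x => ENNReal.ofReal (g x)) := hν ▸ inferInstance
    exact integrable_of_isFiniteMeasure_withDensity_ofReal hg_cont.aestronglyMeasurable
      (ae_of_all _ hg0)
  have hg_one : ∫ x, g x = 1 := by
    simpa [hν] using (integral_withDensity_ofReal (μ := volume) hg_cont.aemeasurable
      (ae_of_all _ hg0) fun _ => (1 : ℝ)).symm
  rw [← hν]
  refine squeeze_zero (fun n => dTV_nonneg _ _) (fun n => dTV_withDensity_ofReal_le (hf_int n)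
    hg_int (ae_of_all _ (hnonneg n)) (ae_of_all _ hg0)) ?_
  simpa using (tendsto_integral_abs_sub_of_tendsto_integral hf_int hg_int
    (fun n => ae_of_all _ (hnonneg n)) (ae_of_all _ hg)
    (by simp only [hprob, hg_one, tendsto_const_nhds])).const_mul 2
end

section
/- Let v be a probability measure on X × X (X a measurable space) invariant for a Markov transition kernel P in the sense that ∫ f(π) v(dπ dQ) = ∫∫ f(π') P(dπ'|π,Q) v(dπ dQ) for all bounded measurable f, and let v(dπ dQ) = v̂(dπ) η(dQ|π) be its disintegration. Then v is an invariant probability measure for the kernel P^Π(dπ' dQ'|π,Q) = P(dπ'|π,Q) η(dQ'|π'): i.e., ∫ g dv = ∫∫ g(π',Q') P^Π(dπ' dQ'|π,Q) v(dπ dQ) for all bounded measurable g. -/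
open MeasureTheory ProbabilityTheory

/-- If `v` (with disintegration `v(dπ dQ) = v̂(dπ) η(dQ|π)`) satisfies the invariance
property `∫ f(π) dv = ∫∫ f(π') P(dπ'|π,Q) dv` for all bounded measurable `f`, then `v` is
invariant for the kernel `P^Π(dπ' dQ'|π,Q) = P(dπ'|π,Q) η(dQ'|π')`. -/
theorem disintegrated_invariance
    (X : Type*) [MeasurableSpace X] [StandardBorelSpace X]
    (v : Measure (X × X)) [IsProbabilityMeasure v]
    (P : Kernel (X × X) X) [IsMarkovKernel P]
    (vhat : Measure X) [IsProbabilityMeasure vhat]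
    (η : Kernel X X) [IsMarkovKernel η]
    (hdis : v = vhat ⊗ₘ η)
    (hinv : ∀ f : X → ℝ, Measurable f → (∃ C, ∀ y, |f y| ≤ C) →
      (∫ p, f p.1 ∂v) = ∫ p, (∫ y, f y ∂(P p)) ∂v) :
    ∀ g : X × X → ℝ, Measurable g → (∃ C, ∀ q, |g q| ≤ C) →
      (∫ q, g q ∂v) = ∫ p, (∫ q, g q ∂((P p) ⊗ₘ η)) ∂v := by
  rintro g hg ⟨C, hC⟩
  set f : X → ℝ := fun π => ∫ y, g (π, y) ∂(η π) with hf
  have hgsm : StronglyMeasurable g := hg.stronglyMeasurable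
  have hfm : Measurable f := hgsm.integral_kernel_prod_right'.measurable
  -- integrability of g against any probability measure
  have hint : ∀ (μ : Measure (X × X)) [IsProbabilityMeasure μ], Integrable g μ := by
    intro μ _
    refine Integrable.mono' (integrable_const C) hg.aestronglyMeasurable ?_
    filter_upwards with q
    simpa [Real.norm_eq_abs] using hC q
  have hfbound : ∀ π, |f π| ≤ C := by
    intro π
    calc |f π| = ‖∫ y, g (π, y) ∂(η π)‖ := by simp [hf, Real.norm_eq_abs]
    _ ≤ C * ((η π) Set.univ).toReal :=
        norm_integral_le_of_norm_le_const (ae_of_all _ fun y => by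
          simpa [Real.norm_eq_abs] using hC (π, y))
    _ = C := by simp
  -- LHS: ∫ g dv = ∫ f dvhat
  have hLHS : (∫ q, g q ∂v) = ∫ π, f π ∂vhat := by
    rw [hdis, Measure.integral_compProd (hdis ▸ hint v)]
  -- marginal: ∫ p, f p.1 ∂v = ∫ f dvhat
  have hmarg : (∫ p, f p.1 ∂v) = ∫ π, f π ∂vhat := by
    have : (∫ p, f p.1 ∂v) = ∫ π, f π ∂(v.map Prod.fst) := by
      rw [integral_map measurable_fst.aemeasurable hfm.aestronglyMeasurable]
    rw [this]
    congr 1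
    calc v.map Prod.fst = v.fst := rfl
    _ = vhat := by rw [hdis, Measure.fst_compProd]
  -- inner: ∫ g ∂(P p ⊗ₘ η) = ∫ f ∂(P p)
  have hinner : ∀ p : X × X, (∫ q, g q ∂((P p) ⊗ₘ η)) = ∫ π', f π' ∂(P p) := by
    intro p
    exact Measure.integral_compProd (hint _)
  calc (∫ q, g q ∂v) = ∫ π, f π ∂vhat := hLHS
  _ = ∫ p, f p.1 ∂v := hmarg.symm
  _ = ∫ p, (∫ y, f y ∂(P p)) ∂v := hinv f hfm ⟨C, hfbound⟩
  _ = ∫ p, (∫ q, g q ∂((P p) ⊗ₘ η)) ∂v := by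
      simp_rw [hinner]
end
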